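/- arXiv:1904.06877 — 3 statements merged into one kernel-verified Lean document; each statement's English description precedes it below -/
import Mathlib

section
/- Let $\{\rho_\alpha\}_{\alpha\in A}$ be a family of non-decreasing functions $\rho_\alpha:[0,T)\to[0,1]$ (with $T\in(0,1)$) satisfying $\rho_\alpha(0)=0$ and $\lim_{t\to 0}\rho_\alpha(t)=0$ for every $\alpha$. Then the following are equivalent: (1) there exists a continuous, non-decreasing, concave function $\lambda:[0,T)\to[0,1]$ with $\lambda(0)=0$ such that $\rho_\alpha(t)\le\lambda(t)$ for all $t\in[0,T)$ and all $\alpha\in A$; (2) the family $\{\rho_\alpha\}_{\alpha\in A}$ is equicontinuous at $t=0$. -/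
open Metric Filter Topology MeasureTheory
open scoped ENNReal NNReal

noncomputable section

/-- A loop, parametrized by `[0,1]` with equal endpoints, is contractible within the set `S`:
it admits a free homotopy, with image inside `S`, to a constant loop. -/
def LoopContractibleIn {X : Type*} [TopologicalSpace X] (c : C(unitInterval, X))
    (S : Set X) : Prop :=
  ∃ (H : C(unitInterval × unitInterval, X)) (x₀ : X),
    (∀ t, H (t, 0) = c t) ∧ (∀ t, H (t, 1) = x₀) ∧ (∀ s, H (0, s) = H (1, s)) ∧
    Set.range H ⊆ S

/-- The module of `1`-contractibility `ρ(t,x)`: the infimum of all `ρ ≥ t` such that every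
loop in `B_t(x)` is contractible in `B_ρ(x)` (and `∞` if there is no such `ρ`). -/
def contrMod {X : Type*} [PseudoEMetricSpace X] (t : ℝ≥0∞) (x : X) : ℝ≥0∞ :=
  sInf {ρ : ℝ≥0∞ | t ≤ ρ ∧ ∀ c : C(unitInterval, X), c 0 = c 1 →
    Set.range c ⊆ EMetric.ball x t → LoopContractibleIn c (EMetric.ball x ρ)}

/-- A length metric space: the distance between two points is the infimum of the lengths
of paths joining them. -/
def IsLengthSpace (X : Type*) [PseudoEMetricSpace X] : Prop :=
  ∀ x y : X, edist x y = ⨅ γ : Path x y, eVariationOn (fun t : ℝ => γ.extend t) (Set.Icc 0 1)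

/-- An `ε`-Gromov–Hausdorff approximation: `f` distorts distances by at most `ε`
and has `ε`-dense image. -/
def IsGHApprox {A B : Type*} [PseudoMetricSpace A] [PseudoMetricSpace B]
    (f : A → B) (ε : ℝ) : Prop :=
  (∀ u v : A, |dist (f u) (f v) - dist u v| ≤ ε) ∧ ∀ b : B, ∃ a : A, dist (f a) b ≤ ε

/-- A pointed `ε`-Gromov–Hausdorff approximation. -/
def IsPointedGHApprox {A B : Type*} [PseudoMetricSpace A] [PseudoMetricSpace B]
    (f : A → B) (a : A) (b : B) (ε : ℝ) : Prop :=
  dist (f a) b ≤ ε ∧ IsGHApprox f ε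

/-- A pointed `ε`-approximation at scale `R` (distortion and density on `R`-balls around
the base points). -/
def IsPGHApproxOn {A B : Type*} [PseudoMetricSpace A] [PseudoMetricSpace B]
    (f : A → B) (a : A) (b : B) (R ε : ℝ) : Prop :=
  dist (f a) b ≤ ε ∧
  (∀ u ∈ Metric.closedBall a R, ∀ v ∈ Metric.closedBall a R,
    |dist (f u) (f v) - dist u v| ≤ ε) ∧
  ∀ y ∈ Metric.closedBall b R, ∃ u ∈ Metric.closedBall a R, dist (f u) y ≤ ε

/-- Pointed Gromov–Hausdorff convergence of `(M i, p i)` to `(X, x)`. -/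
def PointedGHLim (M : ℕ → Type*) [∀ i, MetricSpace (M i)] (p : ∀ i, M i)
    (X : Type*) [MetricSpace X] (x : X) : Prop :=
  ∀ R > 0, ∀ ε > 0, ∀ᶠ i in atTop, ∃ f : M i → X, IsPGHApproxOn f (p i) x R ε

/-- Gromov–Hausdorff convergence of a sequence of metric spaces to `X`. -/
def GHLim (M : ℕ → Type*) [∀ i, MetricSpace (M i)] (X : Type*) [MetricSpace X] : Prop :=
  ∀ ε > 0, ∀ᶠ i in atTop, ∃ f : M i → X, IsGHApprox f ε

/-- The comparison function `sn_c` for the space form of constant curvature `c`. -/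
def modelSn (c t : ℝ) : ℝ :=
  if 0 < c then Real.sin (Real.sqrt c * t) / Real.sqrt c
  else if c < 0 then Real.sinh (Real.sqrt (-c) * t) / Real.sqrt (-c)
  else t

/-- The volume of the ball of radius `r` in the `n`-dimensional simply connected space form
of constant curvature `c`. -/
def modelBallVol (n : ℕ) (c r : ℝ) : ℝ :=
  (μH[(n : ℝ) - 1] (Metric.sphere (0 : EuclideanSpace ℝ (Fin n)) 1)).toReal *
    ∫ t in (0:ℝ)..r, modelSn c t ^ (n - 1)

/-- Synthetic stand-in for the Ricci curvature lower bound `Ric ≥ (n-1)c` on an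
`n`-dimensional Riemannian manifold: the Bishop–Gromov relative volume comparison with
respect to the `n`-dimensional Hausdorff measure (which is the Riemannian volume). -/
def RicciGE (M : Type*) [MetricSpace M] [MeasurableSpace M] [BorelSpace M]
    (n : ℕ) (c : ℝ) : Prop :=
  ∀ x : M, ∀ r R : ℝ, 0 < r → r ≤ R →
    μH[(n : ℝ)] (Metric.ball x R) * ENNReal.ofReal (modelBallVol n c r) ≤
      μH[(n : ℝ)] (Metric.ball x r) * ENNReal.ofReal (modelBallVol n c R)

/-- Localized version of `RicciGE`: `Ric ≥ (n-1)c` on the region `s`. -/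
def RicciGEOn (M : Type*) [MetricSpace M] [MeasurableSpace M] [BorelSpace M]
    (n : ℕ) (c : ℝ) (s : Set M) : Prop :=
  ∀ x ∈ s, ∀ r R : ℝ, 0 < r → r ≤ R → Metric.ball x R ⊆ s →
    μH[(n : ℝ)] (Metric.ball x R) * ENNReal.ofReal (modelBallVol n c r) ≤
      μH[(n : ℝ)] (Metric.ball x r) * ENNReal.ofReal (modelBallVol n c R)

/-- The 1-skeleton of a simplicial complex in the plane. -/
def oneSkel (S : Geometry.SimplicialComplex ℝ ℂ) : Set ℂ :=
  ⋃ f ∈ {f ∈ S.faces | f.card ≤ 2}, convexHull ℝ (f : Set ℂ)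

/-- Equicontinuity at `0` of a family of functions vanishing at `0`. -/
def EquicontAtZero (F : ℕ → ℝ≥0∞ → ℝ≥0∞) : Prop :=
  ∀ ε : ℝ≥0∞, 0 < ε → ∃ δ : ℝ≥0∞, 0 < δ ∧ ∀ i : ℕ, ∀ t < δ, F i t < ε

end
/-- A family of non-decreasing functions on `[0,T)` vanishing (with limit `0`)
at `0` and valued in `[0,1]` is bounded by a common indicatrix iff it is equicontinuous
at `0`. -/
theorem stmt0 {A : Type*} (T : ℝ) (hT0 : 0 < T) (hT1 : T < 1)
    (ρ : A → ℝ → ℝ)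
    (hmono : ∀ a, MonotoneOn (ρ a) (Set.Ico 0 T))
    (hzero : ∀ a, ρ a 0 = 0)
    (hlim : ∀ a, Tendsto (ρ a) (𝓝[>] 0) (𝓝 0))
    (hrange : ∀ a, ∀ t ∈ Set.Ico (0:ℝ) T, ρ a t ∈ Set.Icc (0:ℝ) 1) :
    (∃ lam : ℝ → ℝ,
        ContinuousOn lam (Set.Ico 0 T) ∧ MonotoneOn lam (Set.Ico 0 T) ∧
        ConcaveOn ℝ (Set.Ico 0 T) lam ∧ lam 0 = 0 ∧
        (∀ t ∈ Set.Ico (0:ℝ) T, lam t ∈ Set.Icc (0:ℝ) 1) ∧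
        ∀ a, ∀ t ∈ Set.Ico (0:ℝ) T, ρ a t ≤ lam t) ↔
      (∀ ε > 0, ∃ δ > 0, ∀ a, ∀ t ∈ Set.Ico (0:ℝ) T, t < δ → ρ a t < ε) := by
  constructor
  · rintro ⟨lam, hc, hm, _, h0, hval, hle⟩ ε hε
    have hcw : ContinuousWithinAt lam (Set.Ico 0 T) 0 := hc 0 ⟨le_refl 0, hT0⟩
    rw [Metric.continuousWithinAt_iff] at hcw
    obtain ⟨δ, hδ, hδ'⟩ := hcw ε hε
    refine ⟨δ, hδ, fun a t ht htδ => ?_⟩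
    have h1 : dist t 0 < δ := by
      rw [Real.dist_eq, sub_zero, abs_of_nonneg ht.1]; exact htδ
    have h2 := hδ' ht h1
    rw [Real.dist_eq, h0, sub_zero] at h2
    have h3 : lam t < ε := lt_of_le_of_lt (le_abs_self _) h2
    exact lt_of_le_of_lt (hle a t ht) h3
  · intro h
    set P : ℝ → ℝ → Prop := fun a b => 0 ≤ a ∧ 0 ≤ b ∧
      ∀ α, ∀ s ∈ Set.Ico (0:ℝ) T, ρ α s ≤ a * s + b with hP
    set S : ℝ → Set ℝ := fun t => {y | ∃ a b, P a b ∧ y = a * t + b} with hS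
    set lam : ℝ → ℝ := fun t => sInf (S t) with hlam
    have hP01 : P 0 1 := by
      refine ⟨le_refl 0, zero_le_one, fun α s hs => ?_⟩
      simpa using (hrange α s hs).2
    have hne : ∀ t, (S t).Nonempty := fun t => ⟨0 * t + 1, 0, 1, hP01, rfl⟩
    have hbdd : ∀ t, 0 ≤ t → ∀ y ∈ S t, (0:ℝ) ≤ y := by
      rintro t ht y ⟨a, b, ⟨ha, hb, _⟩, rfl⟩
      positivity
    have hbddb : ∀ t, 0 ≤ t → BddBelow (S t) :=
      fun t ht => ⟨0, fun y hy => hbdd t ht y hy⟩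
    -- lam dominates ρ
    have hdom : ∀ α, ∀ t ∈ Set.Ico (0:ℝ) T, ρ α t ≤ lam t := by
      intro α t ht
      refine le_csInf (hne t) ?_
      rintro y ⟨a, b, ⟨_, _, hab⟩, rfl⟩
      exact hab α t ht
    have h0le : ∀ t, 0 ≤ t → 0 ≤ lam t :=
      fun t ht => le_csInf (hne t) (hbdd t ht)
    have hle1 : ∀ t, 0 ≤ t → lam t ≤ 1 := by
      intro t ht
      have := csInf_le (hbddb t ht) (⟨0, 1, hP01, rfl⟩ : (0 * t + 1) ∈ S t)
      simpa using this
    -- key upper bound from equicontinuity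
    have hkey : ∀ ε : ℝ, 0 < ε → ∃ δ : ℝ, 0 < δ ∧
        ∀ t, 0 ≤ t → lam t ≤ t / δ + ε := by
      intro ε hε
      obtain ⟨δ, hδ, hδ'⟩ := h ε hε
      refine ⟨δ, hδ, fun t ht => ?_⟩
      have hmem : ((1/δ) * t + ε) ∈ S t := by
        refine ⟨1/δ, ε, ⟨by positivity, hε.le, fun α s hs => ?_⟩, rfl⟩
        rcases lt_or_ge s δ with hsδ | hsδ
        · have := hδ' α s hs hsδ
          have hnn : 0 ≤ (1/δ) * s := by
            have := hs.1; positivity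
          linarith
        · have h1 : ρ α s ≤ 1 := (hrange α s hs).2
          have h2 : (1:ℝ) ≤ (1/δ) * s := by
            rw [one_div, inv_mul_eq_div, le_div_iff₀ hδ]; linarith
          linarith
      have := csInf_le (hbddb t ht) hmem
      calc lam t ≤ (1/δ) * t + ε := this
        _ = t / δ + ε := by ring
    -- lam 0 = 0
    have hlam0 : lam 0 = 0 := by
      refine le_antisymm ?_ (h0le 0 le_rfl)
      by_contra hc
      push_neg at hc
      obtain ⟨δ, hδ, hδ'⟩ := hkey (lam 0 / 2) (by linarith)
      have := hδ' 0 le_rfl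
      rw [zero_div] at this
      linarith
    -- monotone
    have hmon : MonotoneOn lam (Set.Ico 0 T) := by
      intro x hx y hy hxy
      refine le_csInf (hne y) ?_
      rintro z ⟨a, b, hab, rfl⟩
      have h1 : a * x + b ∈ S x := ⟨a, b, hab, rfl⟩
      have h2 := csInf_le (hbddb x hx.1) h1
      have : a * x ≤ a * y := mul_le_mul_of_nonneg_left hxy hab.1
      linarith
    -- concave
    have hconc : ConcaveOn ℝ (Set.Ico 0 T) lam := by
      refine ⟨convex_Ico 0 T, ?_⟩
      intro x hx y hy p q hp hq hpq
      refine le_csInf (hne _) ?_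
      rintro z ⟨a, b, hab, rfl⟩
      have h1 : lam x ≤ a * x + b := csInf_le (hbddb x hx.1) ⟨a, b, hab, rfl⟩
      have h2 : lam y ≤ a * y + b := csInf_le (hbddb y hy.1) ⟨a, b, hab, rfl⟩
      have h3 : p * lam x ≤ p * (a * x + b) := mul_le_mul_of_nonneg_left h1 hp
      have h4 : q * lam y ≤ q * (a * y + b) := mul_le_mul_of_nonneg_left h2 hq
      have : p * (a * x + b) + q * (a * y + b) = a * (p * x + q * y) + b := by
        have : p * b + q * b = b := by rw [← add_mul, hpq, one_mul]
        ring_nf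
        nlinarith [hpq]
      simp only [smul_eq_mul]
      linarith
    -- continuity
    have hcont : ContinuousOn lam (Set.Ico 0 T) := by
      have hint : ContinuousOn lam (Set.Ioo 0 T) := by
        have := hconc.continuousOn_interior
        rwa [interior_Ico] at this
      intro t ht
      rcases eq_or_lt_of_le ht.1 with h0t | h0t
      · -- continuity at 0
        subst h0t
        rw [Metric.continuousWithinAt_iff]
        intro ε hε
        obtain ⟨δ, hδ, hδ'⟩ := hkey (ε/2) (by linarith)
        refine ⟨δ * ε / 2, by positivity, fun s hs hdist => ?_⟩
        rw [Real.dist_eq, sub_zero, abs_of_nonneg hs.1] at hdist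
        rw [Real.dist_eq, hlam0, sub_zero, abs_of_nonneg (h0le s hs.1)]
        have h1 := hδ' s hs.1
        have h2 : s / δ < ε / 2 := by
          rw [div_lt_iff₀ hδ]
          calc s < δ * ε / 2 := hdist
            _ = ε / 2 * δ := by ring
        linarith
      · -- interior point
        have : ContinuousAt lam t :=
          (hint.continuousAt (IsOpen.mem_nhds isOpen_Ioo ⟨h0t, ht.2⟩))
        exact this.continuousWithinAt
    exact ⟨lam, hcont, hmon, hconc, hlam0,
      fun t ht => ⟨h0le t ht.1, hle1 t ht.1⟩, hdom⟩
end

section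
/- Let $(X,x)$ and $(Y,y)$ be length metric spaces such that the closure of $B_2(y)$ is compact and the Gromov-Hausdorff distance between $(X,x)$ and $(Y,y)$ is at most $\epsilon$. Then for any loop $c:[0,1]\to B_1(y)\subset Y$, there exists a loop $c':[0,1]\to X$ such that $d(c(t),c'(t))\le 5\epsilon$ for all $t\in[0,1]$ (after identifying points via an $\epsilon$-Gromov-Hausdorff approximation). -/
open Metric Filter Topology MeasureTheory
open scoped ENNReal NNReal

/-!
Subdivide `[0,1]` so finely that `c` moves by less than `ε` on each piece. The images under
`f` of consecutive subdivision points of `c` are then `2ε`-close in `X`; since `X` is a length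
space, they are joined by paths of length less than `3ε`, and the concatenation of these paths,
run at the speed of the subdivision, stays within `2ε + 3ε` of `f ∘ c`.
-/

theorem IsGHApprox.dist_le_add {A B : Type*} [PseudoMetricSpace A] [PseudoMetricSpace B]
    {f : A → B} {ε : ℝ} (hf : IsGHApprox f ε) (u v : A) :
    dist (f u) (f v) ≤ dist u v + ε := by
  linarith [(abs_le.mp (hf.1 u v)).2]

theorem exists_continuous_concat_paths {X : Type*} [TopologicalSpace X] (p : ℕ → X)
    (γ : ∀ k, Path (p k) (p (k + 1))) (n : ℕ) :
    ∃ G : C(ℝ, X), G 0 = p 0 ∧ G n = p n ∧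
      ∀ k < n, ∀ s : unitInterval, G (k + s) = γ k s := by
  induction n with
  | zero => exact ⟨.const ℝ (p 0), rfl, rfl, by simp⟩
  | succ n ih =>
    obtain ⟨G, hG0, hGn, hGγ⟩ := ih
    classical
    let G' : C(ℝ, X) :=
      ⟨fun t => if t ≤ n then G t else (γ n).extend (t - n),
        G.continuous.if_le ((γ n).extend.continuous.comp (continuous_id.sub continuous_const))
          continuous_id continuous_const fun t ht => by simp [ht, hGn]⟩
    have hG'_of_le : ∀ t ≤ (n : ℝ), G' t = G t := fun t ht => if_pos ht
    have hG'_of_ge : ∀ t, (n : ℝ) ≤ t → G' t = (γ n).extend (t - n) := by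
      intro t ht
      by_cases htn : t ≤ n
      · obtain rfl : t = n := le_antisymm htn ht
        simp [G', hGn]
      · exact if_neg htn
    refine ⟨G', by simp [hG'_of_le, hG0], ?_, fun k hk s => ?_⟩
    · rw [hG'_of_ge _ (by push_cast; linarith)]
      simp
    · rcases (Nat.lt_succ_iff.mp hk).lt_or_eq with hk | rfl
      · have hkn : (k : ℝ) + 1 ≤ n := by exact_mod_cast hk
        rw [hG'_of_le _ (by linarith [s.2.2]), hGγ k hk s]
      · rw [hG'_of_ge _ (by linarith [s.2.1]), add_sub_cancel_left, Path.extend_extends']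

theorem exists_nat_mem_Icc_of_mem_Icc {n : ℕ} (hn : 0 < n) {t : ℝ} (ht : t ∈ Set.Icc (0 : ℝ) n) :
    ∃ k < n, t ∈ Set.Icc (k : ℝ) (k + 1) := by
  rcases ht.2.lt_or_eq with htn | rfl
  · exact ⟨⌊t⌋₊, (Nat.floor_lt ht.1).mpr htn, Nat.floor_le ht.1, (Nat.lt_floor_add_one t).le⟩
  · obtain ⟨m, rfl⟩ := Nat.exists_eq_add_of_lt hn
    exact ⟨m, by omega, by push_cast; linarith, by push_cast; linarith⟩

theorem IsLengthSpace.exists_path_dist_le {X : Type*} [PseudoMetricSpace X]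
    (hX : IsLengthSpace X) (a b : X) {δ : ℝ} (hδ : 0 < δ) :
    ∃ γ : Path a b, ∀ s, dist a (γ s) ≤ dist a b + δ := by
  have hlt : (⨅ γ : Path a b, eVariationOn (fun t : ℝ => γ.extend t) (Set.Icc 0 1))
      < edist a b + ENNReal.ofReal δ := by
    rw [← hX a b]
    exact ENNReal.lt_add_right (edist_ne_top a b) (ENNReal.ofReal_pos.mpr hδ).ne'
  obtain ⟨γ, hγ⟩ := iInf_lt_iff.mp hlt
  refine ⟨γ, fun s => ?_⟩
  have hlen : edist a (γ s) ≤ edist a b + ENNReal.ofReal δ :=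
    calc edist a (γ s) = edist (γ.extend 0) (γ.extend s) := by
          rw [γ.extend_zero, γ.extend_extends']
      _ ≤ eVariationOn (fun t : ℝ => γ.extend t) (Set.Icc 0 1) :=
          eVariationOn.edist_le _ (Set.left_mem_Icc.mpr zero_le_one) s.2
      _ ≤ _ := hγ.le
  rw [edist_dist, edist_dist, ← ENNReal.ofReal_add dist_nonneg hδ.le] at hlen
  exact (ENNReal.ofReal_le_ofReal_iff (by positivity)).mp hlen

theorem IsLengthSpace.exists_continuous_dist_le {X : Type*} [PseudoMetricSpace X]
    (hX : IsLengthSpace X) (φ : unitInterval → X) {ρ η δ : ℝ} (hρ : 0 < ρ) (hδ : 0 < δ)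
    (hφ : ∀ s t, dist s t < ρ → dist (φ s) (φ t) ≤ η) :
    ∃ c : C(unitInterval, X), c 0 = φ 0 ∧ c 1 = φ 1 ∧ ∀ t, dist (φ t) (c t) ≤ 2 * η + δ := by
  obtain ⟨N, hN⟩ := exists_nat_one_div_lt hρ
  set n := N + 1
  have hn : (0 : ℝ) < n := by positivity
  let ψ : ℝ → X := Set.IccExtend zero_le_one φ
  have hψ : ∀ s t : ℝ, |s - t| ≤ 1 / n → dist (ψ s) (ψ t) ≤ η := fun s t hst =>
    hφ _ _ <| calc
      dist (Set.projIcc 0 1 zero_le_one s) (Set.projIcc 0 1 zero_le_one t) ≤ dist s t := by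
        simpa using (LipschitzWith.projIcc (zero_le_one' ℝ)).dist_le_mul s t
      _ ≤ 1 / n := by rwa [Real.dist_eq]
      _ < ρ := by exact_mod_cast hN
  let p : ℕ → X := fun k => ψ (k / n)
  choose γ hγ using fun k => hX.exists_path_dist_le (p k) (p (k + 1)) hδ
  obtain ⟨G, hG0, hGn, hGγ⟩ := exists_continuous_concat_paths p γ n
  refine ⟨⟨fun t => G (n * t), by fun_prop⟩, ?_, ?_, fun t => ?_⟩
  · simp [hG0, p, ψ]
  · simp [hGn, p, ψ, hn.ne']
  obtain ⟨k, hk, hkt⟩ := exists_nat_mem_Icc_of_mem_Icc (Nat.succ_pos N)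
    (t := n * t) ⟨by have := t.2.1; positivity, by nlinarith [t.2.2]⟩
  let s : unitInterval := ⟨n * t - k, by linarith [hkt.1], by linarith [hkt.2]⟩
  have hGt : G (n * t) = γ k s := by rw [← hGγ k hk s]; simp [s]
  have htk : |(t : ℝ) - k / n| ≤ 1 / n := by
    rw [show (t : ℝ) - k / n = (n * t - k) / n by field_simp, abs_div, abs_of_pos hn]
    gcongr
    exact abs_le.mpr ⟨by linarith [hkt.1], by linarith [hkt.2]⟩
  have hpk : dist (p k) (p (k + 1)) ≤ η := hψ _ _ <| by
    rw [show (k : ℝ) / n - (k + 1 : ℕ) / n = -(1 / n) by push_cast; ring, abs_neg,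
      abs_of_pos (by positivity)]
  calc dist (φ t) (G (n * t)) ≤ dist (φ t) (p k) + dist (p k) (γ k s) := by
        rw [hGt]; exact dist_triangle _ _ _
    _ ≤ η + (η + δ) := by
        gcongr
        · rw [← Set.IccExtend_val zero_le_one φ t]; exact hψ _ _ htk
        · linarith [hγ k s]
    _ = 2 * η + δ := by ring

theorem stmt3_general (X Y : Type) [MetricSpace X] [MetricSpace Y] (x : X) (y : Y)
    (hX : IsLengthSpace X)
    (ε : ℝ) (hε : 0 < ε)
    (f : Y → X) (hf : IsPointedGHApprox f y x ε)
    (c : C(unitInterval, Y)) (hloop : c 0 = c 1) :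
    ∃ c' : C(unitInterval, X), c' 0 = c' 1 ∧ ∀ t, dist (f (c t)) (c' t) ≤ 5 * ε := by
  obtain ⟨ρ, hρ, hcρ⟩ := Metric.uniformContinuous_iff.mp
    (CompactSpace.uniformContinuous_of_continuous c.continuous) ε hε
  have hfc : ∀ s t, dist s t < ρ → dist (f (c s)) (f (c t)) ≤ 2 * ε := fun s t hst =>
    (hf.2.dist_le_add _ _).trans (by linarith [hcρ hst])
  obtain ⟨c', hc'0, hc'1, hc'⟩ := hX.exists_continuous_dist_le (f ∘ c) hρ hε hfc
  refine ⟨c', by rw [hc'0, hc'1, Function.comp_apply, Function.comp_apply, hloop],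
    fun t => (hc' t).trans_eq (by ring)⟩

/-- near any loop in `B_1(y) ⊆ Y` there is a loop in `X` that is `5ε`-close
to it (measured through the `ε`-GH approximation `f : Y → X`). -/
theorem stmt3 (X Y : Type) [MetricSpace X] [MetricSpace Y] (x : X) (y : Y)
    (hX : IsLengthSpace X) (hY : IsLengthSpace Y)
    (hcomp : IsCompact (closure (Metric.ball y 2)))
    (ε : ℝ) (hε : 0 < ε)
    (f : Y → X) (hf : IsPointedGHApprox f y x ε)
    (c : C(unitInterval, Y)) (hloop : c 0 = c 1)
    (hrange : Set.range c ⊆ Metric.ball y 1) :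
    ∃ c' : C(unitInterval, X), c' 0 = c' 1 ∧ ∀ t, dist (f (c t)) (c' t) ≤ 5 * ε :=
  stmt3_general X Y x y hX ε hε f hf c hloop
end

section
/- Let $T\in(0,1)$ and $\epsilon_0=T/20$. Let $(X,x)$ and $(Y,y)$ be length metric spaces with: (1) the closure of $B_2(x)$ compact; (2) $d_{GH}((X,x),(Y,y))\le\epsilon_0$; (3) for any $q\in B_1(x)$, every loop contained in $B_T(q)$ is contractible in $B_1(q)$. If $c$ is a loop in $B_1(y)$ and $c',c''$ are two loops in $X$ each $5\epsilon_0$-close to $c$, then $c'$ and $c''$ are freely homotopic in $B_2(x)$. -/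
open Metric Filter Topology MeasureTheory
open scoped ENNReal NNReal

/-!
Subdivide the parameter circle so finely that on each piece both loops move by less than
`ε = T / 20`, and join corresponding subdivision points of `c'` and `c''` by almost minimizing
paths, which exist since `X` is a length space; as `f` distorts distances by at most `ε`, the two
loops are `11ε`-close. Each thin quadrilateral so obtained lies within `25ε / 2` of a point of
`c'`, which is within `7ε` of a point `q ∈ B_1(x)`, so its boundary loop lies in `B_T(q)` and is
contractible in `B_1(q) ⊆ B_2(x)`. Read in polar coordinates, a contraction of the boundary of a
square is a filling of the square, and the fillings of the quadrilaterals glue side by side into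
the free homotopy.
-/

open Set unitInterval

noncomputable section

variable {X : Type*} [MetricSpace X]

def projI (t : ℝ) : I := projIcc 0 1 zero_le_one t

@[fun_prop] lemma continuous_projI : Continuous projI := continuous_projIcc (h := zero_le_one)

lemma dist_projI_le (a b : ℝ) : dist (projI a) (projI b) ≤ dist a b := by
  rw [Subtype.dist_eq, Real.dist_eq, Real.dist_eq]
  exact abs_projIcc_sub_projIcc zero_le_one

lemma coe_projI {t : ℝ} (h₀ : 0 ≤ t) (h₁ : t ≤ 1) : (projI t : ℝ) = t := by
  rw [projI, projIcc_of_mem _ ⟨h₀, h₁⟩]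

@[simp] lemma projI_coe (t : I) : projI t = t := projIcc_val zero_le_one t

lemma projI_of_nonpos {t : ℝ} (h : t ≤ 0) : projI t = 0 := projIcc_of_le_left _ h

lemma projI_of_one_le {t : ℝ} (h : 1 ≤ t) : projI t = 1 := projIcc_of_right_le _ h

def HasSides (F : C(I × I, X)) (bot top lft rgt : I → X) : Prop :=
  (∀ u, F (u, 0) = bot u) ∧ (∀ u, F (u, 1) = top u) ∧ (∀ v, F (0, v) = lft v) ∧
    ∀ v, F (1, v) = rgt v

lemma continuous_polar {α : Type*} [TopologicalSpace α] (K : C(I × I, X))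
    (hK : ∀ t, K (t, 1) = K (0, 1)) {θ r : α → ℝ} (hr : Continuous r)
    (hθ : ∀ p, r p ≠ 1 → ContinuousAt θ p) :
    Continuous fun p => K (projI (θ p), projI (r p)) := by
  refine continuous_iff_continuousAt.2 fun p₀ => ?_
  by_cases hp₀ : r p₀ = 1
  · refine Metric.continuousAt_iff'.2 fun ε hε => ?_
    obtain ⟨δ, hδ, hKδ⟩ := Metric.uniformContinuous_iff.1
      (CompactSpace.uniformContinuous_of_continuous K.continuous) ε hε
    filter_upwards [hr.continuousAt.eventually (Metric.ball_mem_nhds _ hδ)] with p hp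
    have hclose : dist (projI (θ p), projI (r p)) (projI (θ p), projI (r p₀)) < δ := by
      rw [Prod.dist_eq, dist_self, max_eq_right dist_nonneg]
      exact (dist_projI_le _ _).trans_lt hp
    simpa only [hp₀, projI_of_one_le le_rfl, hK] using hKδ hclose
  · exact K.continuous.continuousAt.comp <|
      (continuous_projI.continuousAt.comp (hθ p₀ hp₀)).prodMk
        (continuous_projI.continuousAt.comp hr.continuousAt)

section ConeFilling

variable (K : C(I × I, X))

/-- `K` read in sup-norm polar coordinates about the centre of the square, on the quarter facing
the bottom edge: that edge goes to the `k`-th quarter of the base loop `K (·, 0)`, the centre to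
the apex `K (·, 1)`. `coneFill` rotates it to face the other three edges. -/
def coneSector (k : ℝ) (q : ℝ × ℝ) : X :=
  K (projI ((k + (q.1 - q.2) / (1 - 2 * q.2)) / 4), projI (2 * q.2))

def coneFill (p : ℝ × ℝ) : X :=
  if p.2 ≤ p.1 then
    if p.2 ≤ 1 - p.1 then coneSector K 0 p else coneSector K 1 (p.2, 1 - p.1)
  else
    if p.2 ≤ 1 - p.1 then coneSector K 3 (1 - p.2, p.1) else coneSector K 2 (1 - p.1, 1 - p.2)

variable {K} (hK : ∀ t, K (t, 1) = K (0, 1))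
include hK

lemma continuous_coneSector (k : ℝ) : Continuous (coneSector K k) := by
  refine continuous_polar K hK (by fun_prop) fun q hq => ?_
  have : 1 - 2 * q.2 ≠ 0 := fun h => hq (by linarith)
  fun_prop (disch := exact this)

lemma coneSector_turn {k k' : ℝ} (hk : k + 1 = k') {a b : ℝ} (hab : a + b = 1) :
    coneSector K k (a, b) = coneSector K k' (b, 1 - a) := by
  have h₁ : 1 - a = b := by linarith
  simp only [coneSector, h₁, sub_self, zero_div, add_zero]
  by_cases hc : 1 - 2 * b = 0
  · rw [show 2 * b = 1 by linarith, projI_of_one_le le_rfl, hK (projI _), hK (projI _)]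
  · rw [show a - b = 1 - 2 * b by linarith, div_self hc, hk]

omit hK in
lemma coneSector_seam (hper : ∀ s, K (0, s) = K (1, s)) (d : ℝ) :
    coneSector K 4 (d, d) = coneSector K 0 (d, d) := by
  simp only [coneSector, sub_self, zero_div, add_zero]
  rw [projI_of_one_le (by norm_num : (1 : ℝ) ≤ 4 / 4), projI_of_nonpos le_rfl, hper]

lemma continuous_coneFill (hper : ∀ s, K (0, s) = K (1, s)) : Continuous (coneFill K) := by
  have hs := continuous_coneSector hK
  refine Continuous.if_le
    (Continuous.if_le (hs 0) ((hs 1).comp (by fun_prop)) continuous_snd (by fun_prop) ?_)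
    (Continuous.if_le ((hs 3).comp (by fun_prop)) ((hs 2).comp (by fun_prop)) continuous_snd
      (by fun_prop) ?_)
    continuous_snd continuous_fst ?_
  · rintro ⟨a, b⟩ (hab : b = 1 - a)
    exact coneSector_turn hK (zero_add 1) (by linarith)
  · rintro ⟨a, b⟩ (hab : b = 1 - a)
    rw [coneSector_turn hK (by norm_num : (2 : ℝ) + 1 = 3) (by linarith : 1 - a + (1 - b) = 1),
      sub_sub_cancel]
  · rintro ⟨a, b⟩ (hab : b = a)
    subst hab
    dsimp only
    split_ifs
    · rw [coneSector_turn hK (by norm_num : (3 : ℝ) + 1 = 4) (by ring : 1 - b + b = 1),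
        sub_sub_cancel, coneSector_seam hper]
    · exact coneSector_turn hK (by norm_num : (1 : ℝ) + 1 = 2) (by ring)

omit hK in
lemma coneSector_edge (k a : ℝ) : coneSector K k (a, 0) = K (projI ((k + a) / 4), 0) := by
  simp [coneSector, projI_of_nonpos]

omit hK in
lemma coneFill_bottom {u : ℝ} (h₀ : 0 ≤ u) (h₁ : u ≤ 1) :
    coneFill K (u, 0) = coneSector K 0 (u, 0) := by
  simp only [coneFill, if_pos h₀, if_pos (sub_nonneg.2 h₁)]

lemma coneFill_right {v : ℝ} (h₀ : 0 ≤ v) (h₁ : v ≤ 1) :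
    coneFill K (1, v) = coneSector K 1 (v, 0) := by
  simp only [coneFill, if_pos h₁, sub_self]
  split_ifs with hv
  · obtain rfl : v = 0 := le_antisymm hv h₀
    simpa using coneSector_turn hK (zero_add 1) (add_zero 1)
  · rfl

lemma coneFill_top {u : ℝ} (h₀ : 0 ≤ u) (h₁ : u ≤ 1) :
    coneFill K (u, 1) = coneSector K 2 (1 - u, 0) := by
  simp only [coneFill]
  split_ifs with hu hu'
  · linarith
  · obtain rfl : u = 1 := le_antisymm h₁ hu
    simpa using coneSector_turn hK (by norm_num : (1 : ℝ) + 1 = 2) (add_zero 1)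
  · obtain rfl : u = 0 := by linarith
    simpa using (coneSector_turn hK (by norm_num : (2 : ℝ) + 1 = 3) (add_zero 1)).symm
  · rw [sub_self]

lemma coneFill_left (hper : ∀ s, K (0, s) = K (1, s)) {v : ℝ} (h₀ : 0 ≤ v)
    (h₁ : v ≤ 1) :
    coneFill K (0, v) = coneSector K 3 (1 - v, 0) := by
  simp only [coneFill, sub_zero, if_pos h₁]
  split_ifs with hv
  · obtain rfl : v = 0 := le_antisymm hv h₀
    rw [sub_zero, coneSector_turn hK (by norm_num : (3 : ℝ) + 1 = 4) (add_zero 1), sub_self,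
      coneSector_seam hper]
  · rfl

omit hK in
lemma coneFill_mem_range (p : ℝ × ℝ) : coneFill K p ∈ range K := by
  unfold coneFill coneSector
  split_ifs <;> exact mem_range_self _

lemma exists_hasSides_of_cone (hper : ∀ s, K (0, s) = K (1, s)) :
    ∃ F : C(I × I, X),
      HasSides F (fun u => K (projI ((0 + u) / 4), 0)) (fun u => K (projI ((2 + (1 - u)) / 4), 0))
        (fun v => K (projI ((3 + (1 - v)) / 4), 0)) (fun v => K (projI ((1 + v) / 4), 0)) ∧
      range F ⊆ range K := by
  refine ⟨⟨fun p => coneFill K (p.1, p.2), (continuous_coneFill hK hper).comp (by fun_prop)⟩,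
    ⟨fun u => ?_, fun u => ?_, fun v => ?_, fun v => ?_⟩, ?_⟩
  · simp [coneFill_bottom u.2.1 u.2.2, coneSector_edge]
  · simp [coneFill_top hK u.2.1 u.2.2, coneSector_edge]
  · simp [coneFill_left hK hper v.2.1 v.2.2, coneSector_edge]
  · simp [coneFill_right hK v.2.1 v.2.2, coneSector_edge]
  · rintro _ ⟨p, rfl⟩
    exact coneFill_mem_range _

end ConeFilling

section BoundaryLoop

variable (bot top lft rgt : C(I, X))

def boundaryLoop (θ : ℝ) : X :=
  if θ ≤ 1 / 4 then bot (projI (4 * θ))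
  else if θ ≤ 2 / 4 then rgt (projI (4 * θ - 1))
  else if θ ≤ 3 / 4 then top (projI (1 - (4 * θ - 2)))
  else lft (projI (1 - (4 * θ - 3)))

lemma boundaryLoop_mem (θ : ℝ) :
    boundaryLoop bot top lft rgt θ ∈ range bot ∪ range top ∪ range lft ∪ range rgt := by
  unfold boundaryLoop
  split_ifs <;> simp

variable {bot top lft rgt}

lemma continuous_boundaryLoop (hbr : bot 1 = rgt 0) (htr : top 1 = rgt 1) (htl : top 0 = lft 1) :
    Continuous (boundaryLoop bot top lft rgt) := by
  refine Continuous.if_le (by fun_prop) (Continuous.if_le (by fun_prop)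
    (Continuous.if_le (by fun_prop) (by fun_prop) (by fun_prop) (by fun_prop) ?_)
      (by fun_prop) (by fun_prop) ?_) (by fun_prop) (by fun_prop) ?_ <;>
  rintro θ rfl <;> norm_num [projI_of_one_le, projI_of_nonpos, hbr, htr, htl]

lemma boundaryLoop_bot (u : I) : boundaryLoop bot top lft rgt ((0 + u) / 4) = bot u := by
  rw [boundaryLoop, if_pos (by linarith [u.2.2]), show 4 * ((0 + (u : ℝ)) / 4) = u by ring,
    projI_coe]

lemma boundaryLoop_rgt (hbr : bot 1 = rgt 0) (v : I) :
    boundaryLoop bot top lft rgt ((1 + v) / 4) = rgt v := by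
  unfold boundaryLoop
  split_ifs with h₁ h₂
  · obtain rfl : v = 0 := Subtype.ext (show (v : ℝ) = 0 by linarith [v.2.1])
    norm_num [projI_of_one_le, hbr]
  · rw [show 4 * ((1 + (v : ℝ)) / 4) - 1 = v by ring, projI_coe]
  all_goals linarith [v.2.2]

lemma boundaryLoop_top (htr : top 1 = rgt 1) (u : I) :
    boundaryLoop bot top lft rgt ((2 + (1 - u)) / 4) = top u := by
  unfold boundaryLoop
  split_ifs with h₁ h₂ h₃
  · linarith [u.2.2]
  · obtain rfl : u = 1 := Subtype.ext (show (u : ℝ) = 1 by linarith [u.2.2])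
    norm_num [projI_of_one_le, htr]
  · rw [show 1 - (4 * ((2 + (1 - (u : ℝ))) / 4) - 2) = u by ring, projI_coe]
  · linarith [u.2.1]

lemma boundaryLoop_lft (htl : top 0 = lft 1) (v : I) :
    boundaryLoop bot top lft rgt ((3 + (1 - v)) / 4) = lft v := by
  unfold boundaryLoop
  split_ifs with h₁ h₂ h₃
  · linarith [v.2.2]
  · linarith [v.2.2]
  · obtain rfl : v = 1 := Subtype.ext (show (v : ℝ) = 1 by linarith [v.2.2])
    norm_num [projI_of_nonpos, htl]
  · rw [show 1 - (4 * ((3 + (1 - (v : ℝ))) / 4) - 3) = v by ring, projI_coe]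

lemma exists_hasSides_of_loopContractibleIn {U S : Set X}
    (hbl : bot 0 = lft 0) (hbr : bot 1 = rgt 0) (htr : top 1 = rgt 1) (htl : top 0 = lft 1)
    (hU : range bot ∪ range top ∪ range lft ∪ range rgt ⊆ U)
    (hcontr : ∀ γ : C(I, X), γ 0 = γ 1 → range γ ⊆ U → LoopContractibleIn γ S) :
    ∃ F : C(I × I, X), HasSides F bot top lft rgt ∧ range F ⊆ S := by
  let Λ : C(I, X) := ⟨fun t => boundaryLoop bot top lft rgt t,
    (continuous_boundaryLoop hbr htr htl).comp continuous_subtype_val⟩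
  have hΛ : Λ 0 = Λ 1 := by norm_num [Λ, boundaryLoop, projI_of_nonpos, hbl]
  obtain ⟨K, x₀, hK0, hK1, hper, hKS⟩ :=
    hcontr Λ hΛ (range_subset_iff.2 fun t => hU (boundaryLoop_mem _ _ _ _ _))
  have hKθ : ∀ θ : ℝ, 0 ≤ θ → θ ≤ 1 →
      K (projI θ, 0) = boundaryLoop bot top lft rgt θ :=
    fun θ h₀ h₁ => by rw [hK0]; simp [Λ, coe_projI h₀ h₁]
  obtain ⟨F, ⟨hb, ht, hl, hr⟩, hFK⟩ :=
    exists_hasSides_of_cone (K := K) (fun t => by rw [hK1, hK1]) hper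
  dsimp only at hb ht hl hr
  refine ⟨F, ⟨fun u => ?_, fun u => ?_, fun v => ?_, fun v => ?_⟩, hFK.trans hKS⟩
  · rw [hb, hKθ _ (by linarith [u.2.1]) (by linarith [u.2.2]), boundaryLoop_bot]
  · rw [ht, hKθ _ (by linarith [u.2.2]) (by linarith [u.2.1]), boundaryLoop_top htr]
  · rw [hl, hKθ _ (by linarith [v.2.2]) (by linarith [v.2.1]), boundaryLoop_lft htl]
  · rw [hr, hKθ _ (by linarith [v.2.1]) (by linarith [v.2.2]), boundaryLoop_rgt hbr]

end BoundaryLoop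

section Gluing

def arc (γ : C(I, X)) (a b : ℝ) : C(I, X) :=
  ⟨fun u => γ (projI (a + (b - a) * u)), by fun_prop⟩

lemma arc_apply (γ : C(I, X)) (a b : ℝ) (u : I) : arc γ a b u = γ (projI (a + (b - a) * u)) :=
  rfl

lemma arc_zero_one (γ : C(I, X)) : arc γ 0 1 = γ := by
  ext u
  simp [arc_apply]

variable {γ₀ γ₁ : C(I, X)} {σa σb σc : I → X} {a b c : ℝ}

lemma HasSides.glue (hab : a < b) (hbc : b < c) {F₁ F₂ : C(I × I, X)}
    (h₁ : HasSides F₁ (arc γ₀ a b) (arc γ₁ a b) σa σb)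
    (h₂ : HasSides F₂ (arc γ₀ b c) (arc γ₁ b c) σb σc) :
    ∃ F : C(I × I, X), HasSides F (arc γ₀ a c) (arc γ₁ a c) σa σc ∧
      range F ⊆ range F₁ ∪ range F₂ := by
  set l := (b - a) / (c - a) with hl
  have hl₀ : 0 < l := div_pos (by linarith) (by linarith)
  have hl₁ : l < 1 := (div_lt_one (by linarith)).2 (by linarith)
  have hba : b - a ≠ 0 := by linarith
  have hca : c - a ≠ 0 := by linarith
  have hcb : c - b ≠ 0 := by linarith
  let F : I × I → X := fun p =>
    if (p.1 : ℝ) ≤ l then F₁ (projI (p.1 / l), p.2)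
    else F₂ (projI ((p.1 - l) / (1 - l)), p.2)
  have hF : Continuous F := by
    refine Continuous.if_le (by fun_prop) (by fun_prop) (by fun_prop) continuous_const
      fun p hp => ?_
    rw [hp, div_self hl₀.ne', sub_self, zero_div, projI_of_one_le le_rfl,
      projI_of_nonpos le_rfl, h₁.2.2.2, h₂.2.2.1]
  have edge : ∀ (γ : C(I, X)) (s : I), (∀ u, F₁ (u, s) = arc γ a b u) →
      (∀ u, F₂ (u, s) = arc γ b c u) → ∀ u, F (u, s) = arc γ a c u := by
    intro γ s hs₁ hs₂ u
    simp only [F]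
    split_ifs with hu
    · rw [hs₁, arc_apply, arc_apply,
        coe_projI (div_nonneg u.2.1 hl₀.le) ((div_le_one hl₀).2 hu)]
      congr 2
      rw [hl]
      field_simp
    · push Not at hu
      rw [hs₂, arc_apply, arc_apply, coe_projI (div_nonneg (by linarith) (by linarith))
        ((div_le_one (by linarith)).2 (by linarith [u.2.2]))]
      congr 2
      rw [hl, one_sub_div hca, show c - a - (b - a) = c - b by ring]
      field_simp
      ring
  refine ⟨⟨F, hF⟩,
    ⟨edge γ₀ 0 h₁.1 h₂.1, edge γ₁ 1 h₁.2.1 h₂.2.1, fun v => ?_, fun v => ?_⟩,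
    ?_⟩
  · simp [F, hl₀.le, projI_of_nonpos, h₁.2.2.1]
  · simp [F, hl₁.not_ge, div_self (sub_pos.2 hl₁).ne', projI_of_one_le, h₂.2.2.2]
  · rintro _ ⟨p, rfl⟩
    simp only [ContinuousMap.coe_mk, F]
    split_ifs
    exacts [Or.inl (mem_range_self _), Or.inr (mem_range_self _)]

lemma exists_hasSides_of_subdivision {rung : ℕ → I → X} {S : Set X} {N : ℕ} (hN : 0 < N)
    (h : ∀ i < N, ∃ F : C(I × I, X),
      HasSides F (arc γ₀ (i / N) ((i + 1) / N)) (arc γ₁ (i / N) ((i + 1) / N)) (rung i)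
        (rung (i + 1)) ∧ range F ⊆ S) :
    ∃ F : C(I × I, X), HasSides F γ₀ γ₁ (rung 0) (rung N) ∧ range F ⊆ S := by
  have hprefix : ∀ k, 1 ≤ k → k ≤ N → ∃ F : C(I × I, X),
      HasSides F (arc γ₀ 0 (k / N)) (arc γ₁ 0 (k / N)) (rung 0) (rung k) ∧
        range F ⊆ S := by
    intro k hk
    induction k, hk using Nat.le_induction with
    | base => exact fun _ => by simpa using h 0 hN
    | succ k hk ih =>
      intro hkN
      obtain ⟨F₁, hF₁, hF₁S⟩ := ih (by omega)
      obtain ⟨F₂, hF₂, hF₂S⟩ := h k (by omega)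
      have hN' : (0 : ℝ) < N := by exact_mod_cast hN
      obtain ⟨F, hF, hFS⟩ := hF₁.glue (by positivity) (by gcongr; linarith) hF₂
      exact ⟨F, by push_cast; exact hF, hFS.trans (union_subset hF₁S hF₂S)⟩
  obtain ⟨F, hF, hFS⟩ := hprefix N hN le_rfl
  rw [div_self (by positivity), arc_zero_one, arc_zero_one] at hF
  exact ⟨F, hF, hFS⟩

end Gluing

lemma IsLengthSpace.exists_path_dist_add_dist_lt (hX : IsLengthSpace X) (a b : X) {η : ℝ}
    (hη : 0 < η) : ∃ γ : Path a b, ∀ t, dist a (γ t) + dist (γ t) b < dist a b + η := by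
  have hlt : ⨅ γ : Path a b, eVariationOn (fun t : ℝ => γ.extend t) (Icc 0 1) <
      edist a b + ENNReal.ofReal η := by
    rw [← hX a b]
    exact ENNReal.lt_add_right (edist_ne_top a b) (by simpa using hη)
  obtain ⟨γ, hγ⟩ := iInf_lt_iff.1 hlt
  refine ⟨γ, fun t => ?_⟩
  set f := fun s : ℝ => γ.extend s
  have ht : (t : ℝ) ∈ Icc (0 : ℝ) 1 := t.2
  have h₁ : edist a (γ t) ≤ eVariationOn f (Icc 0 1 ∩ Icc 0 t) := by
    simpa [f] using eVariationOn.edist_le f (s := Icc 0 1 ∩ Icc 0 t)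
      (show (0 : ℝ) ∈ _ from ⟨⟨le_rfl, zero_le_one⟩, le_rfl, t.2.1⟩)
      (show (t : ℝ) ∈ _ from ⟨ht, t.2.1, le_rfl⟩)
  have h₂ : edist (γ t) b ≤ eVariationOn f (Icc 0 1 ∩ Icc t 1) := by
    simpa [f] using eVariationOn.edist_le f (s := Icc 0 1 ∩ Icc t 1)
      (show (t : ℝ) ∈ _ from ⟨ht, le_rfl, t.2.2⟩)
      (show (1 : ℝ) ∈ _ from ⟨⟨zero_le_one, le_rfl⟩, t.2.2, le_rfl⟩)
  have hsum : edist a (γ t) + edist (γ t) b < edist a b + ENNReal.ofReal η := by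
    calc edist a (γ t) + edist (γ t) b
        ≤ eVariationOn f (Icc 0 1 ∩ Icc 0 t) + eVariationOn f (Icc 0 1 ∩ Icc t 1) :=
          add_le_add h₁ h₂
      _ = eVariationOn f (Icc 0 1) := by rw [eVariationOn.Icc_add_Icc f t.2.1 t.2.2 ht, inter_self]
      _ < edist a b + ENNReal.ofReal η := hγ
  rw [edist_dist, edist_dist, edist_dist, ← ENNReal.ofReal_add dist_nonneg dist_nonneg,
    ← ENNReal.ofReal_add dist_nonneg hη.le] at hsum
  exact (ENNReal.ofReal_lt_ofReal_iff (by positivity)).1 hsum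

lemma IsLengthSpace.exists_dist_lt_of_dist_lt (hX : IsLengthSpace X) {p x : X} {R s : ℝ}
    (hR : 0 < R) (hs : 0 < s) (h : dist p x < R + s) : ∃ q, dist q x < R ∧ dist p q < s := by
  rcases lt_or_ge (dist p x) R with hpx | hpx
  · exact ⟨p, hpx, by simpa using hs⟩
  set m := max 0 (dist p x - s)
  have hm : m < R := max_lt hR (by linarith)
  obtain ⟨γ, hγ⟩ := hX.exists_path_dist_add_dist_lt p x (η := (R - m) / 2) (by linarith)
  -- walk along a near-geodesic from `p` until the distance to `x` has dropped to `(R + m) / 2`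
  have hmp : m ≤ dist p x := max_le dist_nonneg (by linarith)
  obtain ⟨t, ht⟩ : (R + m) / 2 ∈ range fun t => dist (γ t) x :=
    intermediate_value_univ 1 0 (by fun_prop)
      ⟨by simp only [Path.target, dist_self]; positivity, by simp only [Path.source]; linarith⟩
  refine ⟨γ t, by linarith, ?_⟩
  linarith [hγ t, le_max_right 0 (dist p x - s)]

def FreelyHomotopicIn (S : Set X) (γ₀ γ₁ : C(I, X)) : Prop :=
  ∃ H : C(I × I, X), (∀ t, H (t, 0) = γ₀ t) ∧ (∀ t, H (t, 1) = γ₁ t) ∧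
    (∀ s, H (0, s) = H (1, s)) ∧ range H ⊆ S

lemma LoopContractibleIn.mono {γ : C(I, X)} {S S' : Set X} (h : LoopContractibleIn γ S)
    (hS : S ⊆ S') : LoopContractibleIn γ S' :=
  let ⟨H, x₀, h₀, h₁, hper, hH⟩ := h
  ⟨H, x₀, h₀, h₁, hper, hH.trans hS⟩

theorem freelyHomotopicIn_of_ladder {c' c'' : C(I, X)} {S : Set X} {N : ℕ} (hN : 0 < N)
    (rung : ℕ → C(I, X)) (hrung₀ : ∀ i, rung i 0 = c' (projI (i / N)))
    (hrung₁ : ∀ i, rung i 1 = c'' (projI (i / N))) (hrungN : rung N = rung 0)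
    (hstrip : ∀ i < N, ∃ U : Set X,
      range (arc c' (i / N) ((i + 1) / N)) ∪ range (arc c'' (i / N) ((i + 1) / N)) ∪
        range (rung i) ∪ range (rung (i + 1)) ⊆ U ∧
      ∀ γ : C(I, X), γ 0 = γ 1 → range γ ⊆ U → LoopContractibleIn γ S) :
    FreelyHomotopicIn S c' c'' := by
  obtain ⟨H, hH, hHS⟩ := exists_hasSides_of_subdivision (γ₀ := c') (γ₁ := c'')
    (rung := fun i => rung i) hN fun i hi => by
      obtain ⟨U, hU, hUS⟩ := hstrip i hi
      refine exists_hasSides_of_loopContractibleIn ?_ ?_ ?_ ?_ hU hUS <;>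
        simp [arc_apply, hrung₀, hrung₁]
  exact ⟨H, hH.1, hH.2.1, fun s => by rw [hH.2.2.1, hH.2.2.2, hrungN], hHS⟩

lemma ContinuousMap.exists_nat_dist_lt {Z : Type*} [PseudoMetricSpace Z] (γ : C(I, Z)) {ε : ℝ}
    (hε : 0 < ε) :
    ∃ n : ℕ, ∀ s t : I, dist s t ≤ 1 / (n + 1) → dist (γ s) (γ t) < ε := by
  obtain ⟨δ, hδ, hγ⟩ := Metric.uniformContinuous_iff.1
    (CompactSpace.uniformContinuous_of_continuous γ.continuous) ε hε
  obtain ⟨n, hn⟩ := exists_nat_one_div_lt hδ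
  exact ⟨n, fun s t hst => hγ (hst.trans_lt hn)⟩

lemma dist_projI_arc_le (a b : ℝ) (u : I) :
    dist (projI (a + (b - a) * u)) (projI a) ≤ |b - a| := by
  refine (dist_projI_le _ _).trans ?_
  rw [Real.dist_eq, add_sub_cancel_left, abs_mul, abs_of_nonneg u.2.1]
  exact mul_le_of_le_one_right (abs_nonneg _) u.2.2

theorem freelyHomotopicIn_of_dist_le (hX : IsLengthSpace X) {x : X} {ε : ℝ} (hε : 0 < ε)
    (hcontr : ∀ q ∈ ball x 1, ∀ γ : C(I, X), γ 0 = γ 1 →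
      range γ ⊆ ball q (20 * ε) → LoopContractibleIn γ (ball q 1))
    {c' c'' : C(I, X)} (h₁ : c' 0 = c' 1) (h₂ : c'' 0 = c'' 1)
    (hclose : ∀ t, dist (c' t) (c'' t) ≤ 11 * ε) (hx : ∀ t, dist (c' t) x < 1 + 7 * ε) :
    FreelyHomotopicIn (ball x 2) c' c'' := by
  obtain ⟨n, hn⟩ := (c'.prodMk c'').exists_nat_dist_lt hε
  set N := n + 1
  have hmesh : ∀ s t : I, dist s t ≤ 1 / N →
      dist (c' s) (c' t) < ε ∧ dist (c'' s) (c'' t) < ε :=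
    fun s t hst => max_lt_iff.1 (hn s t (by simpa [N] using hst))
  have hstep : ∀ i : ℕ, |((i + 1 : ℝ) / N) - i / N| = 1 / N := fun i => by
    rw [← sub_div, add_sub_cancel_left, abs_of_pos (by positivity)]
  choose path hpath using fun a b : X => hX.exists_path_dist_add_dist_lt a b (half_pos hε)
  choose q hqx hq using fun t => hX.exists_dist_lt_of_dist_lt one_pos (by positivity) (hx t)
  let τ : ℕ → I := fun i => projI (i / N)
  let rung : ℕ → C(I, X) := fun i => (path (c' (τ i)) (c'' (τ i))).toContinuousMap
  have hrung : ∀ i v, dist (rung i v) (c' (τ i)) < 23 / 2 * ε := fun i v => by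
    have h := hpath (c' (τ i)) (c'' (τ i)) v
    change dist (path (c' (τ i)) (c'' (τ i)) v) _ < _
    rw [dist_comm]
    linarith [hclose (τ i), dist_nonneg (x := path (c' (τ i)) (c'' (τ i)) v) (y := c'' (τ i))]
  have hτ : ∀ i, dist (c' (τ (i + 1))) (c' (τ i)) < ε := fun i => (hmesh _ _ <|
    (dist_projI_le _ _).trans (by rw [Real.dist_eq, Nat.cast_succ, hstep])).1
  refine freelyHomotopicIn_of_ladder n.succ_pos rung (fun i => (path _ _).source)
    (fun i => (path _ _).target) ?_ fun i _ => ⟨ball (q (τ i)) (20 * ε), ?_,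
      fun γ hγ hγU => (hcontr _ (mem_ball.2 (hqx _)) γ hγ hγU).mono
        (ball_subset_ball' (by linarith [hqx (τ i)]))⟩
  · have hτN : τ N = 1 := by
      simp only [τ, div_self (show (N : ℝ) ≠ 0 by positivity), projI_of_one_le le_rfl]
    have hτ0 : τ 0 = 0 := by simp [τ, projI_of_nonpos]
    change (path (c' (τ N)) (c'' (τ N))).toContinuousMap =
      (path (c' (τ 0)) (c'' (τ 0))).toContinuousMap
    rw [hτN, hτ0, h₁, h₂]
  · refine subset_trans ?_
      (closedBall_subset_ball' (x := c' (τ i)) (ε₁ := 25 / 2 * ε) (by linarith [hq (τ i)]))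
    have harc : ∀ u : I, dist (projI (i / N + ((i + 1) / N - i / N) * u)) (τ i) ≤ 1 / N :=
      fun u => (dist_projI_arc_le _ _ u).trans (hstep i).le
    rintro z (((⟨u, rfl⟩ | ⟨u, rfl⟩) | ⟨v, rfl⟩) | ⟨v, rfl⟩) <;> rw [mem_closedBall]
    · rw [arc_apply]
      linarith [(hmesh _ _ (harc u)).1]
    · rw [arc_apply]
      linarith [(hmesh _ _ (harc u)).2, hclose (τ i), dist_comm (c' (τ i)) (c'' (τ i)),
        dist_triangle (c'' (projI (i / N + ((i + 1) / N - i / N) * u))) (c'' (τ i)) (c' (τ i))]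
    · linarith [hrung i v]
    · linarith [hrung (i + 1) v, hτ i,
        dist_triangle (rung (i + 1) v) (c' (τ (i + 1))) (c' (τ i))]

lemma IsGHApprox.dist_le {A B : Type*} [PseudoMetricSpace A] [PseudoMetricSpace B] {f : A → B}
    {ε : ℝ} (hf : IsGHApprox f ε) (u v : A) : dist u v ≤ dist (f u) (f v) + ε := by
  linarith [(abs_le.1 (hf.1 u v)).1]

end

theorem stmt4_general (T : ℝ) (hT0 : 0 < T)
    (X Y : Type) [MetricSpace X] [MetricSpace Y] (x : X) (y : Y)
    (hX : IsLengthSpace X)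
    (f : X → Y) (hf : IsPointedGHApprox f x y (T / 20))
    (hcontr : ∀ q ∈ Metric.ball x 1, ∀ γ : C(unitInterval, X), γ 0 = γ 1 →
      Set.range γ ⊆ Metric.ball q T → LoopContractibleIn γ (Metric.ball q 1))
    (c : C(unitInterval, Y)) (hcr : Set.range c ⊆ Metric.ball y 1)
    (c' c'' : C(unitInterval, X)) (h1 : c' 0 = c' 1) (h2 : c'' 0 = c'' 1)
    (hclose' : ∀ t, dist (f (c' t)) (c t) ≤ 5 * (T / 20))
    (hclose'' : ∀ t, dist (f (c'' t)) (c t) ≤ 5 * (T / 20)) :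
    ∃ H : C(unitInterval × unitInterval, X),
      (∀ t, H (t, 0) = c' t) ∧ (∀ t, H (t, 1) = c'' t) ∧
      (∀ s, H (0, s) = H (1, s)) ∧ Set.range H ⊆ Metric.ball x 2 := by
  have hclose : ∀ t, dist (c' t) (c'' t) ≤ 11 * (T / 20) := fun t => by
    linarith [hf.2.dist_le (c' t) (c'' t), dist_triangle_right (f (c' t)) (f (c'' t)) (c t),
      hclose' t, hclose'' t]
  have hx : ∀ t, dist (c' t) x < 1 + 7 * (T / 20) := fun t => by
    linarith [hf.2.dist_le (c' t) x, dist_triangle4 (f (c' t)) (c t) y (f x), hclose' t, hf.1,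
      mem_ball.1 (hcr (mem_range_self t)), dist_comm y (f x)]
  rw [show T = 20 * (T / 20) by ring] at hcontr
  exact freelyHomotopicIn_of_dist_le hX (by positivity) hcontr h1 h2 hclose hx

/-- with `ε₀ = T/20`, under local `1`-contractibility of `X` at scale `T`,
any two loops of `X` that are `5ε₀`-close to a common loop `c` in `B_1(y)` are freely
homotopic within `B_2(x)`. -/
theorem stmt4 (T : ℝ) (hT0 : 0 < T) (hT1 : T < 1)
    (X Y : Type) [MetricSpace X] [MetricSpace Y] (x : X) (y : Y)
    (hX : IsLengthSpace X) (hY : IsLengthSpace Y)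
    (hcomp : IsCompact (closure (Metric.ball x 2)))
    (f : X → Y) (hf : IsPointedGHApprox f x y (T / 20))
    (hcontr : ∀ q ∈ Metric.ball x 1, ∀ γ : C(unitInterval, X), γ 0 = γ 1 →
      Set.range γ ⊆ Metric.ball q T → LoopContractibleIn γ (Metric.ball q 1))
    (c : C(unitInterval, Y)) (hc : c 0 = c 1) (hcr : Set.range c ⊆ Metric.ball y 1)
    (c' c'' : C(unitInterval, X)) (h1 : c' 0 = c' 1) (h2 : c'' 0 = c'' 1)
    (hclose' : ∀ t, dist (f (c' t)) (c t) ≤ 5 * (T / 20))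
    (hclose'' : ∀ t, dist (f (c'' t)) (c t) ≤ 5 * (T / 20)) :
    ∃ H : C(unitInterval × unitInterval, X),
      (∀ t, H (t, 0) = c' t) ∧ (∀ t, H (t, 1) = c'' t) ∧
      (∀ s, H (0, s) = H (1, s)) ∧ Set.range H ⊆ Metric.ball x 2 :=
  stmt4_general T hT0 X Y x y hX f hf hcontr c hcr c' c'' h1 h2 hclose' hclose''
end
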